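/- In C_{3k+1}, if x, y, z are three vectors each of Hamming weight k with pairwise disjoint supports, then they form an independent set whose unique common neighbor is the all-ones vector; in particular μ₃(C_{3k+1}) = 1. -/

import Mathlib

/-!
Write `w ↦ w + 1` for the antipodal map. Since `d(v, a) + d(v + 1, a) = 3k + 1`, a vertex `v` is
adjacent to `a` iff its antipode lies in the Hamming ball of radius `k` around `a`. Common neighbours
of a triple are therefore antipodes of points within distance `k` of all three.

For `x, y, z` of weight `k` with disjoint supports, every coordinate in a support contributes at
least `1 + [wᵢ ≠ 0]` to `d(w, x) + d(w, y) + d(w, z)`, so this sum is at least `3k + |w|`; it is at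
most `3k` only for `w = 0`, whose antipode is the all-ones vector.

Conversely, any three points at pairwise distance `≤ 2k` have a point within distance `k` of all of
them: start from their coordinatewise median `m`, which lies on a geodesic between any two of them.
At most one of `d(m, a), d(m, b), d(m, c)` exceeds `k`, and if `d(m, a)` does, moving from `m`
towards `a` by `d(m, a) - k` steps brings all three distances down to `≤ k`. Hence every
independent triple has a common neighbour and `μ₃ = 1`.
-/

/-- The graph `C_{3k+1}`: vertices are vectors in `(Z/2)^{3k+1}`,
adjacent iff their Hamming distance is at least `2k+1`. -/
def hypercubeGraph (k : ℕ) : SimpleGraph (Fin (3 * k + 1) → ZMod 2) where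
  Adj x y := 2 * k + 1 ≤ hammingDist x y
  symm := ⟨by
    intro x y h
    change 2 * k + 1 ≤ hammingDist x y at h
    change 2 * k + 1 ≤ hammingDist y x
    rwa [hammingDist_comm]⟩
  loopless := ⟨by
    intro x h
    change 2 * k + 1 ≤ hammingDist x x at h
    rw [hammingDist_self] at h; omega⟩

/-- The minimum, over independent triples, of the number of common neighbors. -/
noncomputable def mu3 {V : Type*} (G : SimpleGraph V) : ℕ :=
  sInf {n | ∃ x y z : V, x ≠ y ∧ x ≠ z ∧ y ≠ z ∧
    ¬ G.Adj x y ∧ ¬ G.Adj x z ∧ ¬ G.Adj y z ∧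
    {v | G.Adj v x ∧ G.Adj v y ∧ G.Adj v z}.ncard = n}

open Finset

section Hamming

variable {ι : Type*}

lemma exists_median (a b c : ι → ZMod 2) :
    ∃ m : ι → ZMod 2, ∀ i, (m i = a i ∨ m i = b i) ∧ (m i = a i ∨ m i = c i) ∧
      (m i = b i ∨ m i = c i) := by
  have majority : ∀ p q r : ZMod 2, let s := if q = r then q else p
      (s = p ∨ s = q) ∧ (s = p ∨ s = r) ∧ (s = q ∨ s = r) := by decide
  exact ⟨fun i => if b i = c i then b i else a i, fun i => majority (a i) (b i) (c i)⟩

variable [Fintype ι]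

lemma hammingDist_eq_sum {β : Type*} [DecidableEq β] (x y : ι → β) :
    hammingDist x y = ∑ i, if x i ≠ y i then 1 else 0 :=
  card_filter _ _

lemma hammingDist_eq_add_of_between {β : Type*} [DecidableEq β] {x y m : ι → β}
    (h : ∀ i, m i = x i ∨ m i = y i) :
    hammingDist x y = hammingDist x m + hammingDist m y := by
  simp only [hammingDist_eq_sum, ← sum_add_distrib]
  refine sum_congr rfl fun i _ => ?_
  rcases h i with h | h <;> rw [h] <;> by_cases hxy : x i = y i <;> simp [hxy]

lemma hammingDist_eq_hammingNorm_add {β : Type*} [Zero β] [DecidableEq β] {x y : ι → β}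
    (h : ∀ i, x i = 0 ∨ y i = 0) :
    hammingDist x y = hammingNorm x + hammingNorm y := by
  rw [hammingDist_eq_add_of_between (m := 0) fun i => (h i).imp Eq.symm Eq.symm,
    hammingDist_zero_right, hammingDist_zero_left]

lemma exists_hammingDist_eq_of_le {β : Type*} [DecidableEq β] {x y : ι → β} {t : ℕ}
    (ht : t ≤ hammingDist x y) :
    ∃ w, hammingDist x w = t ∧ hammingDist w y = hammingDist x y - t := by
  classical
  obtain ⟨S, hS, rfl⟩ := exists_subset_card_eq ht
  let w : ι → β := fun i => if i ∈ S then y i else x i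
  have hxw : hammingDist x w = #S := by
    refine congrArg card (ext fun i => ?_)
    by_cases hi : i ∈ S
    · simpa [w, hi] using (mem_filter.1 (hS hi)).2
    · simp [w, hi]
  have hbetween := hammingDist_eq_add_of_between (x := x) (y := y) (m := w) fun i => by
    by_cases hi : i ∈ S <;> simp [w, hi]
  exact ⟨w, hxw, by omega⟩

lemma exists_hammingDist_le_of_hammingDist_le {β : Type*} [DecidableEq β] {a b c m : ι → β}
    {k : ℕ} (hab : hammingDist m a + hammingDist m b ≤ 2 * k)
    (hac : hammingDist m a + hammingDist m c ≤ 2 * k)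
    (hb : hammingDist m b ≤ k) (hc : hammingDist m c ≤ k) :
    ∃ w, hammingDist w a ≤ k ∧ hammingDist w b ≤ k ∧ hammingDist w c ≤ k := by
  by_cases ha : hammingDist m a ≤ k
  · exact ⟨m, ha, hb, hc⟩
  obtain ⟨w, hmw, hwa⟩ := exists_hammingDist_eq_of_le (Nat.sub_le (hammingDist m a) k)
  have hwb := hammingDist_triangle w m b
  have hwc := hammingDist_triangle w m c
  rw [hammingDist_comm w m, hmw] at hwb hwc
  exact ⟨w, by omega, by omega, by omega⟩

lemma exists_hammingDist_le_of_pairwise {a b c : ι → ZMod 2} {k : ℕ}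
    (hab : hammingDist a b ≤ 2 * k) (hac : hammingDist a c ≤ 2 * k)
    (hbc : hammingDist b c ≤ 2 * k) :
    ∃ w, hammingDist w a ≤ k ∧ hammingDist w b ≤ k ∧ hammingDist w c ≤ k := by
  obtain ⟨m, hm⟩ := exists_median a b c
  rw [hammingDist_eq_add_of_between fun i => (hm i).1, hammingDist_comm a m] at hab
  rw [hammingDist_eq_add_of_between fun i => (hm i).2.1, hammingDist_comm a m] at hac
  rw [hammingDist_eq_add_of_between fun i => (hm i).2.2, hammingDist_comm b m] at hbc
  by_cases hb : hammingDist m b ≤ k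
  · by_cases hc : hammingDist m c ≤ k
    · exact exists_hammingDist_le_of_hammingDist_le hab hac hb hc
    · obtain ⟨w, hwc, hwa, hwb⟩ :=
        exists_hammingDist_le_of_hammingDist_le (a := c) (b := a) (c := b) (m := m) (k := k)
          (by omega) (by omega) (by omega) (by omega)
      exact ⟨w, hwa, hwb, hwc⟩
  · obtain ⟨w, hwb, hwa, hwc⟩ :=
      exists_hammingDist_le_of_hammingDist_le (a := b) (b := a) (c := c) (m := m) (k := k)
        (by omega) (by omega) (by omega) (by omega)
    exact ⟨w, hwa, hwb, hwc⟩

lemma hammingDist_add_one_add_hammingDist (v a : ι → ZMod 2) :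
    hammingDist (v + 1) a + hammingDist v a = Fintype.card ι := by
  have hflip : ∀ p q : ZMod 2, ((if p + 1 ≠ q then 1 else 0) + if p ≠ q then 1 else 0) = 1 := by
    decide
  simp only [hammingDist_eq_sum, ← sum_add_distrib, Pi.add_apply, Pi.one_apply, hflip,
    sum_const, card_univ, smul_eq_mul, mul_one]

lemma add_hammingNorm_le_hammingDist_add {x y z : ι → ZMod 2}
    (hxy : ∀ i, x i = 0 ∨ y i = 0) (hxz : ∀ i, x i = 0 ∨ z i = 0)
    (hyz : ∀ i, y i = 0 ∨ z i = 0) (w : ι → ZMod 2) :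
    hammingNorm x + hammingNorm y + hammingNorm z + hammingNorm w ≤
      hammingDist w x + hammingDist w y + hammingDist w z := by
  have pointwise : ∀ p q r s : ZMod 2, (p = 0 ∨ q = 0) → (p = 0 ∨ r = 0) → (q = 0 ∨ r = 0) →
      (((if p ≠ 0 then 1 else 0) + (if q ≠ 0 then 1 else 0) + (if r ≠ 0 then 1 else 0) +
        if s ≠ 0 then 1 else 0) : ℕ) ≤
      (if s ≠ p then 1 else 0) + (if s ≠ q then 1 else 0) + (if s ≠ r then 1 else 0) := by
    decide
  simp only [← hammingDist_zero_right, hammingDist_eq_sum, ← sum_add_distrib]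
  exact sum_le_sum fun i _ => pointwise _ _ _ _ (hxy i) (hxz i) (hyz i)

end Hamming

section Graph

lemma mu3_eq_one_of_exists_common_neighbor {V : Type*} [Finite V] (G : SimpleGraph V)
    (hne : ∀ x y z, x ≠ y → x ≠ z → y ≠ z → ¬ G.Adj x y → ¬ G.Adj x z → ¬ G.Adj y z →
      ∃ v, G.Adj v x ∧ G.Adj v y ∧ G.Adj v z)
    (hone : ∃ x y z, x ≠ y ∧ x ≠ z ∧ y ≠ z ∧ ¬ G.Adj x y ∧ ¬ G.Adj x z ∧ ¬ G.Adj y z ∧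
      {v | G.Adj v x ∧ G.Adj v y ∧ G.Adj v z}.ncard = 1) :
    mu3 G = 1 := by
  refine le_antisymm (Nat.sInf_le hone) (le_csInf ⟨1, hone⟩ ?_)
  rintro n ⟨x, y, z, hxy, hxz, hyz, hnxy, hnxz, hnyz, rfl⟩
  exact (Set.ncard_pos (Set.toFinite _)).2 (hne x y z hxy hxz hyz hnxy hnxz hnyz)

variable {k : ℕ}

lemma hypercubeGraph_adj_iff (v a : Fin (3 * k + 1) → ZMod 2) :
    (hypercubeGraph k).Adj v a ↔ hammingDist (v + 1) a ≤ k := by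
  have := hammingDist_add_one_add_hammingDist v a
  rw [Fintype.card_fin] at this
  change 2 * k + 1 ≤ hammingDist v a ↔ _
  omega

lemma hypercubeGraph_not_adj_iff (a b : Fin (3 * k + 1) → ZMod 2) :
    ¬ (hypercubeGraph k).Adj a b ↔ hammingDist a b ≤ 2 * k :=
  not_le.trans Nat.lt_succ_iff

lemma hypercubeGraph_exists_common_neighbor {a b c : Fin (3 * k + 1) → ZMod 2}
    (hab : ¬ (hypercubeGraph k).Adj a b) (hac : ¬ (hypercubeGraph k).Adj a c)
    (hbc : ¬ (hypercubeGraph k).Adj b c) :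
    ∃ v, (hypercubeGraph k).Adj v a ∧ (hypercubeGraph k).Adj v b ∧
      (hypercubeGraph k).Adj v c := by
  rw [hypercubeGraph_not_adj_iff] at hab hac hbc
  obtain ⟨w, hw⟩ := exists_hammingDist_le_of_pairwise hab hac hbc
  refine ⟨w + 1, ?_⟩
  simpa only [hypercubeGraph_adj_iff, add_assoc, ZModModule.add_self, add_zero] using hw

lemma hypercubeGraph_ne_and_not_adj_of_disjoint (hk : 0 < k) {a b : Fin (3 * k + 1) → ZMod 2}
    (ha : hammingNorm a = k) (hb : hammingNorm b = k) (hab : ∀ i, a i = 0 ∨ b i = 0) :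
    a ≠ b ∧ ¬ (hypercubeGraph k).Adj a b := by
  have hd := hammingDist_eq_hammingNorm_add hab
  refine ⟨fun h => ?_, (hypercubeGraph_not_adj_iff a b).2 (by omega)⟩
  rw [h, hammingDist_self] at hd
  omega

lemma hypercubeGraph_common_neighbors_eq_one {x y z : Fin (3 * k + 1) → ZMod 2}
    (hwx : hammingNorm x = k) (hwy : hammingNorm y = k) (hwz : hammingNorm z = k)
    (hxy : ∀ i, x i = 0 ∨ y i = 0) (hxz : ∀ i, x i = 0 ∨ z i = 0)
    (hyz : ∀ i, y i = 0 ∨ z i = 0) :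
    {v | (hypercubeGraph k).Adj v x ∧ (hypercubeGraph k).Adj v y ∧
      (hypercubeGraph k).Adj v z} = {1} := by
  ext v
  simp only [Set.mem_ofPred_eq, Set.mem_singleton_iff, hypercubeGraph_adj_iff]
  constructor
  · rintro ⟨h1, h2, h3⟩
    have := add_hammingNorm_le_hammingDist_add hxy hxz hyz (v + 1)
    have hv : v + 1 = 0 := hammingNorm_eq_zero.1 (by omega)
    rw [eq_neg_of_add_eq_zero_left hv, ZModModule.neg_eq_self]
  · rintro rfl
    simp only [ZModModule.add_self, hammingDist_zero_left, hwx, hwy, hwz, le_refl, and_self]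

end Graph

theorem stmt_5 (k : ℕ) (hk : 0 < k) (x y z : Fin (3 * k + 1) → ZMod 2)
    (hwx : hammingNorm x = k) (hwy : hammingNorm y = k) (hwz : hammingNorm z = k)
    (hxy : ∀ i, x i = 0 ∨ y i = 0)
    (hxz : ∀ i, x i = 0 ∨ z i = 0)
    (hyz : ∀ i, y i = 0 ∨ z i = 0) :
    (x ≠ y ∧ x ≠ z ∧ y ≠ z ∧
      ¬ (hypercubeGraph k).Adj x y ∧ ¬ (hypercubeGraph k).Adj x z ∧
      ¬ (hypercubeGraph k).Adj y z) ∧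
    {v | (hypercubeGraph k).Adj v x ∧ (hypercubeGraph k).Adj v y ∧
      (hypercubeGraph k).Adj v z} = {fun _ => 1} ∧
    mu3 (hypercubeGraph k) = 1 := by
  obtain ⟨hne_xy, hn_xy⟩ := hypercubeGraph_ne_and_not_adj_of_disjoint hk hwx hwy hxy
  obtain ⟨hne_xz, hn_xz⟩ := hypercubeGraph_ne_and_not_adj_of_disjoint hk hwx hwz hxz
  obtain ⟨hne_yz, hn_yz⟩ := hypercubeGraph_ne_and_not_adj_of_disjoint hk hwy hwz hyz
  have common := hypercubeGraph_common_neighbors_eq_one hwx hwy hwz hxy hxz hyz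
  refine ⟨⟨hne_xy, hne_xz, hne_yz, hn_xy, hn_xz, hn_yz⟩, common,
    mu3_eq_one_of_exists_common_neighbor _
      (fun _ _ _ _ _ _ => hypercubeGraph_exists_common_neighbor) ⟨x, y, z, ?_⟩⟩
  rw [common, Set.ncard_singleton]
  exact ⟨hne_xy, hne_xz, hne_yz, hn_xy, hn_xz, hn_yz, rfl⟩
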